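/- arXiv:1408.5963 — 4 statements merged into one kernel-verified Lean document; each statement's English description precedes it below -/
import Mathlib

section
/- Let A be a (Π,ℛ)-automaton and let Φ be the set of all types τ such that for some n, τ is the (Π,ℛ,n)-type of some pointed model accepted by A in round n. Then for every pointed (Π,ℛ)-model (M,w), A accepts (M,w) if and only if (M,w) satisfies some formula in Φ. Moreover, the (Π,ℛ,n)-type of (M,w) lies in Φ if and only if A accepts (M,w) in round n. -/
/-- Formulae of modal logic ML(Π,ℛ): `P` indexes unary predicate symbols,
`R` indexes binary relation symbols (modalities). -/
inductive MF (P R : Type) : Type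
  | top : MF P R
  | atom : P → MF P R
  | neg : MF P R → MF P R
  | and : MF P R → MF P R → MF P R
  | dia : R → MF P R → MF P R

/-- A (Π,ℛ)-Kripke model with domain `W`. -/
structure KModel (P R W : Type) where
  val : P → W → Prop
  rel : R → W → W → Prop

/-- Satisfaction for modal logic. -/
def msat {P R W : Type} (M : KModel P R W) : W → MF P R → Prop
  | _, .top => True
  | w, .atom p => M.val p w
  | w, .neg φ => ¬ msat M w φ
  | w, .and φ ψ => msat M w φ ∧ msat M w ψ
  | w, .dia r φ => ∃ v, M.rel r w v ∧ msat M v φ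

/-- Abstract representation of (Π,ℛ,n)-types: a depth-0 type records the set of
unary predicates holding at a point; a depth-(n+1) type records a depth-n type
together with, for each modality, the set of depth-n types realized at successors. -/
def TypeN (P R : Type) : ℕ → Type
  | 0 => Set P
  | n+1 => TypeN P R n × (R → Set (TypeN P R n))

/-- A pointed model `(M,w)` satisfies the (Π,ℛ,n)-type `τ`. -/
def satT {P R W : Type} (M : KModel P R W) : (n : ℕ) → W → TypeN P R n → Prop
  | 0, w, τ => ∀ p, M.val p w ↔ τ p
  | n+1, w, τ => satT M n w τ.1 ∧
      ∀ r σ, ((∃ v, M.rel r w v ∧ satT M n v σ) ↔ τ.2 r σ)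

/-- The (Π,ℛ,n)-type of a pointed model `(M,w)`. -/
def typeOf {P R W : Type} (M : KModel P R W) : (n : ℕ) → W → TypeN P R n
  | 0, w => fun p => M.val p w
  | n+1, w => ⟨typeOf M n w, fun r σ => ∃ v, M.rel r w v ∧ typeOf M n v = σ⟩

/-- A synchronized message passing (Π,ℛ)-automaton with states `Q` and messages `Msg`. -/
structure MPA (P R Q Msg : Type) where
  init : Set P → Q
  trans : (R → Set Msg) → Q → Q
  msgf : Q → R → Msg
  accept : Set Q
  reject : Set Q

/-- The state of automaton `A` at node `w` of model `M` in round `n`. -/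
def MPA.run {P R W Q Msg : Type} (A : MPA P R Q Msg) (M : KModel P R W) : ℕ → W → Q
  | 0, w => A.init {p | M.val p w}
  | n+1, w =>
      A.trans (fun r => {m | ∃ v, M.rel r w v ∧ m = A.msgf (A.run M n v) r}) (A.run M n w)

/-- `A` accepts `(M,w)` in round `n`. -/
def MPA.acceptsAt {P R W Q Msg : Type} (A : MPA P R Q Msg) (M : KModel P R W)
    (w : W) (n : ℕ) : Prop :=
  A.run M n w ∈ A.accept ∧ ∀ m < n, A.run M m w ∉ A.reject

/-- `A` rejects `(M,w)` in round `n`. -/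
def MPA.rejectsAt {P R W Q Msg : Type} (A : MPA P R Q Msg) (M : KModel P R W)
    (w : W) (n : ℕ) : Prop :=
  A.run M n w ∈ A.reject ∧ ∀ m < n, A.run M m w ∉ A.accept

/-- `A` accepts the pointed model `(M,w)`. -/
def MPA.accepts {P R W Q Msg : Type} (A : MPA P R Q Msg) (M : KModel P R W) (w : W) : Prop :=
  ∃ n, A.acceptsAt M w n

/-- `A` rejects the pointed model `(M,w)`. -/
def MPA.rejects {P R W Q Msg : Type} (A : MPA P R Q Msg) (M : KModel P R W) (w : W) : Prop :=
  ∃ n, A.rejectsAt M w n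

/-- Formulae of first-order logic FO(Π,ℛ) with variables indexed by ℕ. -/
inductive FO (P R : Type) : Type
  | top : FO P R
  | eq : ℕ → ℕ → FO P R
  | atom : P → ℕ → FO P R
  | rel : R → ℕ → ℕ → FO P R
  | neg : FO P R → FO P R
  | and : FO P R → FO P R → FO P R
  | ex : ℕ → FO P R → FO P R

/-- First-order satisfaction under an assignment `f`. -/
def fsat {P R W : Type} (M : KModel P R W) : (ℕ → W) → FO P R → Prop
  | _, .top => True
  | f, .eq x y => f x = f y
  | f, .atom p x => M.val p (f x)
  | f, .rel r x y => M.rel r (f x) (f y)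
  | f, .neg φ => ¬ fsat M f φ
  | f, .and φ ψ => fsat M f φ ∧ fsat M f ψ
  | f, .ex x φ => ∃ v, fsat M (Function.update f x v) φ

theorem satT_iff {P R W : Type} (M : KModel P R W) :
    ∀ (n : ℕ) (w : W) (τ : TypeN P R n), satT M n w τ ↔ typeOf M n w = τ
  | 0, w, τ => by
    simp only [satT, typeOf]
    exact ⟨fun h => funext fun p => propext (h p), fun h p => iff_of_eq (congrFun h p)⟩
  | n+1, w, τ => by
    simp only [satT, typeOf, satT_iff M n]
    constructor
    · rintro ⟨h1, h2⟩
      exact Prod.ext h1 (funext fun r => funext fun σ => propext (h2 r σ))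
    · rintro rfl
      exact ⟨rfl, fun r σ => Iff.rfl⟩

theorem run_eq_of_typeOf {P R Q Msg : Type} (A : MPA P R Q Msg) :
    ∀ (n : ℕ) {W W' : Type} (M : KModel P R W) (M' : KModel P R W') (w : W) (w' : W'),
      typeOf M n w = typeOf M' n w' → A.run M n w = A.run M' n w'
  | 0, W, W', M, M', w, w', h => by
    simp only [MPA.run]
    exact congrArg A.init h
  | n+1, W, W', M, M', w, w', h => by
    have h1 : typeOf M n w = typeOf M' n w' := congrArg Prod.fst h
    have h2 : ∀ r σ, (∃ v, M.rel r w v ∧ typeOf M n v = σ) ↔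
        (∃ v, M'.rel r w' v ∧ typeOf M' n v = σ) := by
      intro r σ
      have := congrArg Prod.snd h
      simp only [typeOf] at this
      exact iff_of_eq (congrFun (congrFun this r) σ)
    simp only [MPA.run]
    rw [run_eq_of_typeOf A n M M' w w' h1]
    congr 1
    funext r
    ext m
    constructor
    · rintro ⟨v, hv, rfl⟩
      obtain ⟨v', hv', ht⟩ := (h2 r (typeOf M n v)).1 ⟨v, hv, rfl⟩
      exact ⟨v', hv', by rw [run_eq_of_typeOf A n M M' v v' ht.symm]⟩
    · rintro ⟨v', hv', rfl⟩
      obtain ⟨v, hv, ht⟩ := (h2 r (typeOf M' n v')).2 ⟨v', hv', rfl⟩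
      exact ⟨v, hv, by rw [run_eq_of_typeOf A n M M' v v' ht]⟩

theorem typeOf_le {P R : Type} :
    ∀ (n m : ℕ), m ≤ n → ∀ {W W' : Type} (M : KModel P R W) (M' : KModel P R W') (w : W) (w' : W'),
      typeOf M n w = typeOf M' n w' → typeOf M m w = typeOf M' m w'
  | 0, m, hm, W, W', M, M', w, w', h => by
    obtain rfl := Nat.le_zero.mp hm; exact h
  | n+1, m, hm, W, W', M, M', w, w', h => by
    rcases Nat.lt_or_ge m (n+1) with hlt | hge
    · exact typeOf_le n m (Nat.lt_succ_iff.mp hlt) M M' w w' (congrArg Prod.fst h)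
    · obtain rfl : m = n+1 := le_antisymm hm hge
      exact h

theorem acceptsAt_of_typeOf {P R Q Msg : Type} (A : MPA P R Q Msg)
    {W W' : Type} (M : KModel P R W) (M' : KModel P R W') (w : W) (w' : W') (n : ℕ)
    (h : typeOf M n w = typeOf M' n w') :
    A.acceptsAt M w n ↔ A.acceptsAt M' w' n := by
  have key : ∀ m ≤ n, A.run M m w = A.run M' m w' := fun m hm =>
    run_eq_of_typeOf A m M M' w w' (typeOf_le n m hm M M' w w' h)
  unfold MPA.acceptsAt
  rw [key n le_rfl]
  constructor
  · rintro ⟨ha, hr⟩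
    exact ⟨ha, fun m hm => by rw [← key m hm.le]; exact hr m hm⟩
  · rintro ⟨ha, hr⟩
    exact ⟨ha, fun m hm => by rw [key m hm.le]; exact hr m hm⟩

/-- let Φ be the set of all types τ (of any depth n) that are the
(Π,ℛ,n)-type of some pointed model accepted in round n by A. Then A accepts (M,w)
iff (M,w) satisfies some member of Φ; moreover the (Π,ℛ,n)-type of (M,w) lies in Φ
iff A accepts (M,w) in round n. -/
theorem stmt_5 (P R Q Msg : Type) (A : MPA P R Q Msg)
    (Φ : Set (Σ n : ℕ, TypeN P R n))
    (hΦ : ∀ p : Σ n : ℕ, TypeN P R n, p ∈ Φ ↔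
        ∃ (W' : Type) (M' : KModel P R W') (w' : W'), satT M' p.1 w' p.2 ∧ A.acceptsAt M' w' p.1)
    (W : Type) (M : KModel P R W) (w : W) :
    (A.accepts M w ↔ ∃ p ∈ Φ, satT M p.1 w p.2) ∧
    (∀ (n : ℕ) (τ : TypeN P R n), satT M n w τ →
      ((⟨n, τ⟩ : Σ n : ℕ, TypeN P R n) ∈ Φ ↔ A.acceptsAt M w n)) := by
  have part2 : ∀ (n : ℕ) (τ : TypeN P R n), satT M n w τ →
      ((⟨n, τ⟩ : Σ n : ℕ, TypeN P R n) ∈ Φ ↔ A.acceptsAt M w n) := by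
    intro n τ hsat
    have hτ : typeOf M n w = τ := (satT_iff M n w τ).1 hsat
    rw [hΦ]
    constructor
    · rintro ⟨W', M', w', hsat', hacc'⟩
      have hτ' : typeOf M' n w' = τ := (satT_iff M' n w' τ).1 hsat'
      exact (acceptsAt_of_typeOf A M' M w' w n (hτ'.trans hτ.symm)).1 hacc'
    · intro hacc
      exact ⟨W, M, w, hsat, hacc⟩
  refine ⟨?_, part2⟩
  constructor
  · rintro ⟨n, hacc⟩
    have hsat : satT M n w (typeOf M n w) := (satT_iff M n w _).2 rfl
    exact ⟨⟨n, typeOf M n w⟩, (hΦ _).2 ⟨W, M, w, hsat, hacc⟩, hsat⟩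
  · rintro ⟨p, hp, hsat⟩
    exact ⟨p.1, (part2 p.1 p.2 hsat).1 hp⟩
end

section
/- Let 𝓗 be a class of pointed (Π,ℛ)-models definable by a first-order theory T. If a (Π,ℛ)-automaton A converges in 𝓗 (i.e., accepts or rejects every pointed model in 𝓗), then A specifies a local algorithm in 𝓗: there exists n ∈ ℕ such that A accepts or rejects every (M,w) ∈ 𝓗 within n rounds. -/
/-!
Suppose there were no uniform bound: choose, for each `n`, a pointed model of `T` on which `A`
has decided nothing by round `n`, and take their ultraproduct over a nonprincipal ultrafilter.
By Łoś's theorem (here in place of compactness) the ultraproduct is again a model of `T`, so `A`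
decides it in some round `k`. Since `P` and `R` are finite there are only finitely many depth-`k`
modal types, so the ultraproduct has the same depth-`k` type as almost every factor; and the
first `k` rounds of a run depend only on that type. Hence `A` decides almost every factor in
round `k`, in particular one with index at least `k`.
-/

open Filter

instance TypeN.instFinite {P R : Type} [Finite P] [Finite R] : ∀ n, Finite (TypeN P R n)
  | 0 => inferInstanceAs (Finite (Set P))
  | n + 1 =>
    have := TypeN.instFinite (P := P) (R := R) n
    inferInstanceAs (Finite (TypeN P R n × (R → Set (TypeN P R n))))

namespace MPA

variable {P R W W' Q Msg : Type} (A : MPA P R Q Msg) {M : KModel P R W} {M' : KModel P R W'}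

theorem run_eq_of_typeOf_eq {n : ℕ} {w : W} {w' : W'} (h : typeOf M n w = typeOf M' n w') :
    A.run M n w = A.run M' n w' := by
  induction n generalizing w w' with
  | zero => exact congrArg A.init h
  | succ n ih =>
    obtain ⟨hroot, hsucc⟩ := Prod.ext_iff.1 h
    have hmsg : ∀ r m, (∃ v, M.rel r w v ∧ m = A.msgf (A.run M n v) r) →
        ∃ v', M'.rel r w' v' ∧ m = A.msgf (A.run M' n v') r := by
      rintro r m ⟨v, hv, rfl⟩
      obtain ⟨v', hv', htype⟩ : ∃ v', M'.rel r w' v' ∧ typeOf M' n v' = typeOf M n v :=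
        (congrFun (congrFun hsucc r) _).mp ⟨v, hv, rfl⟩
      exact ⟨v', hv', by rw [ih htype.symm]⟩
    have hmsg' : ∀ r m, (∃ v', M'.rel r w' v' ∧ m = A.msgf (A.run M' n v') r) →
        ∃ v, M.rel r w v ∧ m = A.msgf (A.run M n v) r := by
      rintro r m ⟨v', hv', rfl⟩
      obtain ⟨v, hv, htype⟩ : ∃ v, M.rel r w v ∧ typeOf M n v = typeOf M' n v' :=
        (congrFun (congrFun hsucc r) _).mpr ⟨v', hv', rfl⟩
      exact ⟨v, hv, by rw [ih htype]⟩
    simp only [run, ih hroot]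
    congr 1
    ext r m
    exact ⟨hmsg r m, hmsg' r m⟩

variable {w : W} {w' : W'} {n : ℕ}

theorem acceptsAt_congr (h : ∀ m ≤ n, A.run M m w = A.run M' m w') :
    A.acceptsAt M w n ↔ A.acceptsAt M' w' n := by
  simp +contextual only [acceptsAt, h n le_rfl, fun m (hm : m < n) => h m hm.le]

theorem rejectsAt_congr (h : ∀ m ≤ n, A.run M m w = A.run M' m w') :
    A.rejectsAt M w n ↔ A.rejectsAt M' w' n := by
  simp +contextual only [rejectsAt, h n le_rfl, fun m (hm : m < n) => h m hm.le]

end MPA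

theorem Ultrafilter.eventually_iff_const {ι : Type*} (U : Ultrafilter ι) {p : ι → Prop} {q : Prop} :
    (∀ᶠ i in U, p i ↔ q) ↔ ((∀ᶠ i in U, p i) ↔ q) := by
  by_cases hq : q <;> simp only [hq, iff_true, iff_false, Ultrafilter.eventually_not]

theorem Filter.eventually_exists_iff_exists_pi {ι : Type*} {W : ι → Type*} [∀ i, Nonempty (W i)]
    {l : Filter ι} {p : ∀ i, W i → Prop} :
    (∀ᶠ i in l, ∃ v, p i v) ↔ ∃ g : ∀ i, W i, ∀ᶠ i in l, p i (g i) := by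
  refine ⟨fun h => ?_, fun ⟨g, hg⟩ => hg.mono fun i hi => ⟨g i, hi⟩⟩
  have : ∀ i, ∃ v, (∃ v, p i v) → p i v := fun i => by
    by_cases hi : ∃ v, p i v
    · exact ⟨hi.choose, fun _ => hi.choose_spec⟩
    · exact ⟨Classical.ofNonempty, fun h => absurd h hi⟩
  choose g hg using this
  exact ⟨g, h.mono fun i hi => hg i hi⟩

namespace KModel

variable {ι P R : Type} {W : ι → Type} (U : Ultrafilter ι) (M : ∀ i, KModel P R (W i))

def ultraproduct : KModel P R (Quotient ((U : Filter ι).productSetoid W)) where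
  val p := Quotient.lift (fun f => ∀ᶠ i in U, (M i).val p (f i))
    fun _ _ h => propext (eventually_congr (h.mono fun i hi => by rw [hi]))
  rel r := Quotient.lift₂ (fun f g => ∀ᶠ i in U, (M i).rel r (f i) (g i))
    fun _ _ _ _ hf hg => propext (eventually_congr ((hf.and hg).mono fun i hi => by
      rw [hi.1, hi.2]))

local notation "⟪" F "⟫" => Quotient.mk (Filter.productSetoid (U : Filter ι) W) F

theorem ultraproduct_val_mk (p : P) (F : ∀ i, W i) :
    (ultraproduct U M).val p ⟪F⟫ ↔ ∀ᶠ i in U, (M i).val p (F i) :=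
  Iff.rfl

theorem ultraproduct_rel_mk (r : R) (F G : ∀ i, W i) :
    (ultraproduct U M).rel r ⟪F⟫ ⟪G⟫ ↔ ∀ᶠ i in U, (M i).rel r (F i) (G i) :=
  Iff.rfl

variable [∀ i, Nonempty (W i)]

theorem fsat_ultraproduct (φ : FO P R) (F : ℕ → ∀ i, W i) :
    fsat (ultraproduct U M) (fun x => ⟪F x⟫) φ ↔ ∀ᶠ i in U, fsat (M i) (fun x => F x i) φ := by
  induction φ generalizing F with
  | top => simp [fsat]
  | eq x y => exact Quotient.eq
  | atom p x => exact Iff.rfl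
  | rel r x y => exact Iff.rfl
  | neg φ ih => simp only [fsat, ih, Ultrafilter.eventually_not]
  | and φ ψ ihφ ihψ => simp only [fsat, ihφ, ihψ, eventually_and]
  | ex x φ ih =>
    classical
    have hupd : ∀ g : ∀ i, W i,
        Function.update (fun y => ⟪F y⟫) x ⟪g⟫ = fun y => ⟪Function.update F x g y⟫ :=
      fun g => funext fun y => (Function.apply_update (fun _ => Quotient.mk _) F x g y).symm
    have hupd' : ∀ (g : ∀ i, W i) i,
        (fun y => Function.update F x g y i) = Function.update (fun y => F y i) x (g i) :=
      fun g i => funext fun y => Function.apply_update (fun _ f => f i) F x g y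
    simp only [fsat, Quotient.exists, hupd, ih, hupd', eventually_exists_iff_exists_pi]

theorem typeOf_ultraproduct [Finite P] [Finite R] (n : ℕ) (F : ∀ i, W i) (σ : TypeN P R n) :
    typeOf (ultraproduct U M) n ⟪F⟫ = σ ↔ ∀ᶠ i in U, typeOf (M i) n (F i) = σ := by
  induction n generalizing F with
  | zero =>
    dsimp only [typeOf, TypeN, Set] at σ ⊢
    simp only [funext_iff, eq_iff_iff, eventually_all, Ultrafilter.eventually_iff_const,
      ultraproduct_val_mk]
  | succ n ih =>
    have hsucc : ∀ r τ, (∃ v, (ultraproduct U M).rel r ⟪F⟫ v ∧ typeOf (ultraproduct U M) n v = τ)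
        ↔ ∀ᶠ i in U, ∃ v, (M i).rel r (F i) v ∧ typeOf (M i) n v = τ := fun r τ => by
      simp only [Quotient.exists, ultraproduct_rel_mk, ih, ← eventually_and,
        eventually_exists_iff_exists_pi]
    dsimp only [typeOf, TypeN, Set] at σ ⊢
    simp only [Prod.ext_iff, ih, eventually_and, funext_iff, eq_iff_iff, eventually_all,
      Ultrafilter.eventually_iff_const, hsucc]

theorem fsat_ultraproduct_of_forall {φ : FO P R} (h : ∀ i (f : ℕ → W i), fsat (M i) f φ)
    (f : ℕ → Quotient ((U : Filter ι).productSetoid W)) : fsat (ultraproduct U M) f φ := by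
  obtain ⟨F, rfl⟩ : ∃ F : ℕ → ∀ i, W i, (fun x => ⟪F x⟫) = f :=
    ⟨fun x => (f x).out, funext fun x => (f x).out_eq⟩
  exact (fsat_ultraproduct U M φ F).2 (Eventually.of_forall fun i => h i _)

theorem eventually_run_eq_run_ultraproduct [Finite P] [Finite R] {Q Msg : Type}
    (A : MPA P R Q Msg) (n : ℕ) (F : ∀ i, W i) :
    ∀ᶠ i in U, A.run (M i) n (F i) = A.run (ultraproduct U M) n ⟪F⟫ :=
  ((typeOf_ultraproduct U M n F _).1 rfl).mono fun _ h => A.run_eq_of_typeOf_eq h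

end KModel

/-- if a class 𝓗 of pointed models is definable by a first-order theory
T (membership depends only on the model satisfying T, not on the point) and a
(Π,ℛ)-automaton A converges in 𝓗, then A specifies a local algorithm in 𝓗: there
is n such that A accepts or rejects every member of 𝓗 within n rounds. -/
theorem stmt_9 (P R : Type) [Finite P] [Finite R]
    (H : ∀ W : Type, KModel P R W → W → Prop)
    (T : Set (FO P R))
    (hdef : ∀ (W : Type) (M : KModel P R W) (w : W),
        H W M w ↔ ∀ φ ∈ T, ∀ f : ℕ → W, fsat M f φ)
    (Q Msg : Type) (A : MPA P R Q Msg)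
    (hconv : ∀ (W : Type) (M : KModel P R W) (w : W),
        H W M w → A.accepts M w ∨ A.rejects M w) :
    ∃ n : ℕ, ∀ (W : Type) (M : KModel P R W) (w : W), H W M w →
      ∃ m ≤ n, A.acceptsAt M w m ∨ A.rejectsAt M w m := by
  by_contra! hbad
  choose W M w hH hundecided using hbad
  have : ∀ i, Nonempty (W i) := fun i => ⟨w i⟩
  let U := hyperfilter ℕ
  let Mω := KModel.ultraproduct U M
  let wω : Quotient ((U : Filter ℕ).productSetoid W) := Quotient.mk _ w
  have hHω : H _ Mω wω := (hdef _ _ _).2 fun φ hφ =>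
    KModel.fsat_ultraproduct_of_forall U M fun i => (hdef _ _ _).1 (hH i) φ hφ
  obtain ⟨k, hk⟩ : ∃ k, A.acceptsAt Mω wω k ∨ A.rejectsAt Mω wω k := by
    rcases hconv _ _ _ hHω with ⟨k, hk⟩ | ⟨k, hk⟩
    exacts [⟨k, .inl hk⟩, ⟨k, .inr hk⟩]
  obtain ⟨i, hki, hrun⟩ : ∃ i, k ≤ i ∧ ∀ m ≤ k, A.run (M i) m (w i) = A.run Mω m wω :=
    (Eventually.and (Nat.hyperfilter_le_atTop (eventually_ge_atTop k)) <|
      (Set.finite_Iic k).eventually_all.2 fun m _ =>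
        KModel.eventually_run_eq_run_ultraproduct U M A m w).exists
  rw [← A.acceptsAt_congr hrun, ← A.rejectsAt_congr hrun] at hk
  exact not_or.2 (hundecided i k hki) hk
end

section
/- There exist arbitrarily long finite cube-free binary words: for every n ∈ ℕ there is a word w ∈ {0,1}* of length n containing no factor of the form uuu with u nonempty. -/
def tm : ℕ → Bool
  | 0 => false
  | n+1 =>
    if (n+1) % 2 = 0 then tm ((n+1)/2) else !(tm ((n+1)/2))
  decreasing_by all_goals exact Nat.div_lt_self (Nat.succ_pos n) (by norm_num)

lemma tm_two (m : ℕ) : tm (2*m) = tm m := by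
  cases m with
  | zero => rfl
  | succ k =>
    have h : 2*(k+1) = (2*k+1)+1 := by ring
    rw [h, tm]
    have : (2*k+1+1) % 2 = 0 := by omega
    simp [this]
    have h2 : (2*k+1+1)/2 = k+1 := by omega
    rw [h2]

lemma tm_odd (m : ℕ) : tm (2*m+1) = !(tm m) := by
  have h : 2*m+1 = (2*m)+1 := rfl
  rw [tm]
  have h2 : ¬ ((2*m+1) % 2 = 0) := by omega
  rw [if_neg h2]
  have h3 : (2*m+1)/2 = m := by omega
  rw [h3]

lemma tm_even_ne (e : ℕ) (he : e % 2 = 0) : tm e ≠ tm (e+1) := by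
  obtain ⟨m, rfl⟩ : ∃ m, e = 2*m := ⟨e/2, by omega⟩
  rw [tm_two, tm_odd]
  cases tm m <;> simp

theorem tm_no_overlap : ∀ p, 0 < p → ∀ i, ¬ (∀ j, j ≤ p → tm (i+j) = tm (i+j+p)) := by
  intro p
  induction p using Nat.strong_induction_on with
  | _ p IH =>
  intro hp i h
  rcases Nat.even_or_odd p with ⟨q, hq⟩ | ⟨q, hq⟩
  · -- p even, p = q + q
    have hq1 : 0 < q := by omega
    rcases Nat.even_or_odd i with ⟨a, ha⟩ | ⟨a, ha⟩
    · refine IH q (by omega) hq1 a (fun j hj => ?_)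
      have hh := h (2*j) (by omega)
      have e1 : i + 2*j = 2*(a+j) := by omega
      have e2 : i + 2*j + p = 2*(a+j+q) := by omega
      rw [e2, e1, tm_two, tm_two] at hh
      exact hh
    · refine IH q (by omega) hq1 a (fun j hj => ?_)
      have hh := h (2*j) (by omega)
      have e1 : i + 2*j = 2*(a+j)+1 := by omega
      have e2 : i + 2*j + p = 2*(a+j+q)+1 := by omega
      rw [e2, e1, tm_odd, tm_odd] at hh
      exact Bool.not_inj hh
  · -- p odd, p = 2q+1
    by_cases hq0 : q = 0
    · subst hq0
      have h0 := h 0 (by omega)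
      have h1 := h 1 (by omega)
      have e0 : i + 0 = i := by omega
      have e1 : i + 0 + p = i + 1 := by omega
      have e2 : i + 1 + p = i + 2 := by omega
      rw [e1, e0] at h0
      rw [e2] at h1
      rcases Nat.even_or_odd i with ⟨a, ha⟩ | ⟨a, ha⟩
      · exact tm_even_ne i (by omega) h0
      · exact tm_even_ne (i+1) (by omega) h1
    · -- p ≥ 3
      by_cases hd : ∃ x, i ≤ x ∧ x + 1 ≤ i + 2*p ∧ tm x = tm (x+1)
      · obtain ⟨x, hx1, hx2, hx3⟩ := hd
        have hodd : x % 2 = 1 := by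
          by_contra hc
          exact tm_even_ne x (by omega) hx3
        by_cases hxp : i + p ≤ x
        · have h1 := h (x - p - i) (by omega)
          have h2 := h (x + 1 - p - i) (by omega)
          have e1 : i + (x - p - i) = x - p := by omega
          have e2 : i + (x - p - i) + p = x := by omega
          have e3 : i + (x + 1 - p - i) = x - p + 1 := by omega
          have e4 : i + (x + 1 - p - i) + p = x + 1 := by omega
          rw [e2, e1] at h1
          rw [e4, e3] at h2
          exact tm_even_ne (x - p) (by omega) (by rw [h1, h2]; exact hx3)
        · have h1 := h (x - i) (by omega)
          have h2 := h (x + 1 - i) (by omega)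
          have e1 : i + (x - i) = x := by omega
          have e2 : i + (x - i) + p = x + p := by omega
          have e3 : i + (x + 1 - i) = x + 1 := by omega
          have e4 : i + (x + 1 - i) + p = x + p + 1 := by omega
          rw [e2, e1] at h1
          rw [e4, e3] at h2
          exact tm_even_ne (x + p) (by omega) (by rw [← h1, ← h2]; exact hx3)
      · push_neg at hd
        refine IH 2 (by omega) (by norm_num) i (fun j hj => ?_)
        have n1 := hd (i+j) (by omega) (by omega)
        have n2 := hd (i+j+1) (by omega) (by omega)
        have e : i+j+1+1 = i+j+2 := by omega
        rw [e] at n2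
        revert n1 n2
        cases tm (i+j) <;> cases tm (i+j+1) <;> cases tm (i+j+2) <;> simp

theorem tm_no_cube (i p : ℕ) (hp : 0 < p)
    (h : ∀ j, j < p → tm (i+j) = tm (i+j+p) ∧ tm (i+j+p) = tm (i+j+2*p)) : False := by
  apply tm_no_overlap p hp i
  intro j hj
  by_cases hjp : j < p
  · exact (h j hjp).1
  · have hjeq : j = p := by omega
    have h0 := (h 0 hp).2
    have e1 : i + 0 + p = i + p := by omega
    have e2 : i + 0 + 2*p = i + p + p := by omega
    rw [e2, e1] at h0
    rw [hjeq]
    exact h0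

lemma get_mid (a c u : List Bool) (j : ℕ) (hj : j < u.length) :
    (a ++ (u ++ c))[a.length + j]? = u[j]? := by
  rw [List.getElem?_append_right (by omega)]
  have e : a.length + j - a.length = j := by omega
  rw [e, List.getElem?_append_left hj]

/-- there exist arbitrarily long finite cube-free binary words: for
every n there is a word of length n with no factor uuu, u nonempty. -/
theorem stmt_12 (n : ℕ) :
    ∃ w : List Bool, w.length = n ∧
      ∀ t u v : List Bool, u ≠ [] → w ≠ t ++ u ++ u ++ u ++ v := by

  refine ⟨(List.range n).map tm, by simp, ?_⟩
  intro t u v hu heq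
  have hp : 0 < u.length := List.length_pos_iff.mpr hu
  set i := t.length with hi
  set p := u.length with hpdef
  have heq' : (List.range n).map tm = t ++ (u ++ (u ++ (u ++ v))) := by
    rw [heq]; simp [List.append_assoc]
  have hlen : n = i + p + p + p + v.length := by
    have hc := congrArg List.length heq'
    simp at hc
    omega
  have hw : ∀ k, k < n → ((List.range n).map tm)[k]? = some (tm k) := by
    intro k hk
    simp [List.getElem?_map, List.getElem?_range hk]
  have key : ∀ j, j < p → tm (i+j) = tm (i+j+p) ∧ tm (i+j+p) = tm (i+j+2*p) := by
    intro j hj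
    have g1 : ((List.range n).map tm)[i + j]? = u[j]? := by
      rw [heq']; exact get_mid t (u ++ (u ++ v)) u j hj
    have g2 : ((List.range n).map tm)[i + p + j]? = u[j]? := by
      rw [heq', ← List.append_assoc]
      have e : i + p + j = (t ++ u).length + j := by
        simp only [List.length_append]; try omega
      rw [e]
      exact get_mid (t ++ u) (u ++ v) u j hj
    have g3 : ((List.range n).map tm)[i + p + p + j]? = u[j]? := by
      rw [heq', ← List.append_assoc, ← List.append_assoc]
      have e : i + p + p + j = ((t ++ u) ++ u).length + j := by
        simp only [List.length_append]; try omega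
      rw [e]
      exact get_mid ((t ++ u) ++ u) v u j hj
    have k1 : i + j < n := by omega
    have k2 : i + p + j < n := by omega
    have k3 : i + p + p + j < n := by omega
    rw [hw _ k1] at g1
    rw [hw _ k2] at g2
    rw [hw _ k3] at g3
    have e2 : i + j + p = i + p + j := by omega
    have e3 : i + j + 2*p = i + p + p + j := by omega
    rw [e2, e3]
    constructor
    · exact Option.some_injective _ (g1.trans g2.symm)
    · exact Option.some_injective _ (g2.trans g3.symm)
  exact tm_no_cube i p hp key
end

section
/- There exists a (Π,ℛ)-automaton running on finite SB(Π)-models that halts on every finite pointed SB(Π)-model but is strongly nonlocal: no automaton specifying a local algorithm accepts exactly the same finite pointed SB(Π)-models. -/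
/-- An SB(Π)-model over Π = {P₀,P₁,Q₁,Q₂,Q₃} (indexed by `Fin 5` as 0,1,2,3,4):
a Kripke model with a single symmetric irreflexive relation. -/
def IsSB {W : Type} (M : KModel (Fin 5) Unit W) : Prop :=
  (∀ u v, M.rel () u v → M.rel () v u) ∧ (∀ u, ¬ M.rel () u u)

/-- An automaton halts on a pointed model: it accepts or rejects it, and once its
state at the point is an accepting or rejecting state it stays fixed forever. -/
def MPA.haltsOn {P R W Q Msg : Type} (A : MPA P R Q Msg) (M : KModel P R W) (w : W) : Prop :=
  (A.accepts M w ∨ A.rejects M w) ∧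
  ∀ n m, n ≤ m → A.run M n w ∈ A.accept ∪ A.reject → A.run M m w = A.run M n w

def thueMorse : ℕ → Bool := Nat.binaryRec false fun b _ t => xor b t

theorem thueMorse_two_mul_add (b : Bool) (n : ℕ) :
    thueMorse (2 * n + b.toNat) = xor b (thueMorse n) := by
  rw [← Nat.bit_val]
  exact Nat.binaryRec_eq b n (Or.inl rfl)

theorem odd_of_thueMorse_eq_succ {k : ℕ} (h : thueMorse k = thueMorse (k + 1)) : Odd k := by
  obtain ⟨a, rfl | rfl⟩ := Nat.even_or_odd' k
  · have h0 := thueMorse_two_mul_add false a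
    have h1 := thueMorse_two_mul_add true a
    simp only [Bool.toNat_false, Bool.toNat_true, add_zero] at h0 h1
    simp [h0, h1] at h
  · exact odd_two_mul_add_one a

theorem Bool.eq_xor_bodd_of_forall_lt {f : ℕ → Bool} {p : ℕ} (h : ∀ m < p, f (m + 1) = !f m) :
    f p = xor p.bodd (f 0) := by
  induction p with
  | zero => simp
  | succ p ih =>
    rw [h p p.lt_succ_self, ih fun m hm => h m (by omega)]
    simp

theorem thueMorse_overlapFree {p : ℕ} (hp : 0 < p) (s : ℕ) :
    ¬ ∀ m ≤ p, thueMorse (s + m) = thueMorse (s + m + p) := by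
  induction p using Nat.strong_induction_on generalizing s with
  | _ p ih =>
  intro hover
  obtain ⟨q, rfl | rfl⟩ := Nat.even_or_odd' p
  · -- an overlap of period `2q` at `2a + b` halves to one of period `q` at `a`
    obtain ⟨a, b, rfl⟩ : ∃ a b, s = 2 * a + Bool.toNat b :=
      ⟨s.div2, s.bodd, by rw [add_comm]; exact (Nat.bodd_add_div2 s).symm⟩
    refine ih q (by omega) (by omega) a fun m hm => ?_
    have h := hover (2 * m) (by omega)
    rw [show 2 * a + b.toNat + 2 * m = 2 * (a + m) + b.toNat by ring,
      show 2 * (a + m) + b.toNat + 2 * q = 2 * (a + m + q) + b.toNat by ring,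
      thueMorse_two_mul_add, thueMorse_two_mul_add] at h
    simpa using h
  · by_cases hpair : ∃ m < 2 * q + 1, thueMorse (s + m) = thueMorse (s + m + 1)
    · obtain ⟨m, hm, heq⟩ := hpair
      have hshift : thueMorse (s + m + (2 * q + 1)) = thueMorse (s + m + (2 * q + 1) + 1) := by
        calc thueMorse (s + m + (2 * q + 1)) = thueMorse (s + (m + 1)) := by
              rw [← hover m hm.le, heq]; rfl
          _ = _ := by rw [hover (m + 1) hm]; ring_nf
      obtain ⟨a, ha⟩ := odd_of_thueMorse_eq_succ heq
      obtain ⟨b, hb⟩ := odd_of_thueMorse_eq_succ hshift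
      omega
    · -- no two equal neighbours: the factor alternates, so its ends differ as the length is even
      push Not at hpair
      have halt := Bool.eq_xor_bodd_of_forall_lt (f := fun m => thueMorse (s + m)) (p := 2 * q + 1)
        fun m hm => by simpa [← add_assoc, Bool.eq_not, eq_comm] using hpair m hm
      have h0 := hover 0 (Nat.zero_le _)
      simp_all

theorem Finite.exists_eventually_periodic {α : Type*} [Finite α] {f : ℕ → α} (g : α → α)
    (hf : ∀ t, f (t + 1) = g (f t)) : ∃ i p, 0 < p ∧ ∀ k, f (i + k + p) = f (i + k) := by
  obtain ⟨i, j, hne, heq⟩ := Finite.exists_ne_map_eq_of_infinite f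
  wlog hij : i < j generalizing i j
  · exact this j i hne.symm heq.symm (by omega)
  refine ⟨i, j - i, by omega, fun k => ?_⟩
  induction k with
  | zero => simpa [show i + (j - i) = j by omega] using heq.symm
  | succ k ih => rw [show i + (k + 1) + (j - i) = i + k + (j - i) + 1 by omega, hf, ih, ← hf]; rfl

theorem typeOf_eq_of_le {P R W₁ W₂ : Type} {M₁ : KModel P R W₁} {M₂ : KModel P R W₂}
    {w₁ : W₁} {w₂ : W₂} {m n : ℕ} (h : typeOf M₁ n w₁ = typeOf M₂ n w₂) (hmn : m ≤ n) :
    typeOf M₁ m w₁ = typeOf M₂ m w₂ := by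
  induction n, hmn using Nat.le_induction with
  | base => exact h
  | succ n _ ih => exact ih (congrArg Prod.fst h)

theorem MPA.run_eq_of_typeOf_eq_s15 {P R Q Msg W₁ W₂ : Type} (A : MPA P R Q Msg)
    {M₁ : KModel P R W₁} {M₂ : KModel P R W₂} {t : ℕ} {w₁ : W₁} {w₂ : W₂}
    (h : typeOf M₁ t w₁ = typeOf M₂ t w₂) : A.run M₁ t w₁ = A.run M₂ t w₂ := by
  induction t generalizing w₁ w₂ with
  | zero => exact congrArg A.init h
  | succ t ih =>
    obtain ⟨h₁, h₂⟩ := Prod.ext_iff.1 h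
    have hnbr := fun r σ => Iff.of_eq (congrFun (congrFun h₂ r) σ)
    simp only [typeOf] at h₁ hnbr
    simp only [MPA.run, ih h₁]
    congr 1
    funext r
    ext msg
    constructor
    · rintro ⟨v, hv, rfl⟩
      obtain ⟨v', hv', hσ⟩ := (hnbr r (typeOf M₁ t v)).1 ⟨v, hv, rfl⟩
      exact ⟨v', hv', by rw [ih hσ.symm]⟩
    · rintro ⟨v, hv, rfl⟩
      obtain ⟨v', hv', hσ⟩ := (hnbr r (typeOf M₂ t v)).2 ⟨v, hv, rfl⟩
      exact ⟨v', hv', by rw [ih hσ]⟩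

theorem MPA.exists_acceptsAt_le {P R Q Msg W : Type} {A : MPA P R Q Msg} {M : KModel P R W}
    {w : W} {n : ℕ} (hacc : A.accepts M w)
    (hdec : ∃ m ≤ n, A.acceptsAt M w m ∨ A.rejectsAt M w m) : ∃ k ≤ n, A.acceptsAt M w k := by
  obtain ⟨k, hk⟩ := hacc
  obtain ⟨m, hm, hacc | hrej⟩ := hdec
  · exact ⟨m, hm, hacc⟩
  · refine ⟨k, ?_, hk⟩
    by_contra! hlt
    exact hk.2 m (by omega) hrej.1

theorem MPA.acceptsAt_congr_s15 {P R Q Msg W₁ W₂ : Type} (A : MPA P R Q Msg)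
    {M₁ : KModel P R W₁} {M₂ : KModel P R W₂} {w₁ : W₁} {w₂ : W₂} {k : ℕ}
    (h : ∀ m ≤ k, A.run M₁ m w₁ = A.run M₂ m w₂) : A.acceptsAt M₁ w₁ k ↔ A.acceptsAt M₂ w₂ k := by
  simp only [MPA.acceptsAt]
  rw [h k le_rfl]
  exact and_congr_right' (forall₂_congr fun m hm => by rw [h m hm.le])

theorem MPA.accepts_iff_of_typeOf_eq {P R Q Msg W₁ W₂ : Type} (A : MPA P R Q Msg)
    {M₁ : KModel P R W₁} {M₂ : KModel P R W₂} {w₁ : W₁} {w₂ : W₂} {n : ℕ}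
    (h : typeOf M₁ n w₁ = typeOf M₂ n w₂)
    (hdec₁ : ∃ m ≤ n, A.acceptsAt M₁ w₁ m ∨ A.rejectsAt M₁ w₁ m)
    (hdec₂ : ∃ m ≤ n, A.acceptsAt M₂ w₂ m ∨ A.rejectsAt M₂ w₂ m) :
    A.accepts M₁ w₁ ↔ A.accepts M₂ w₂ := by
  have hrun : ∀ m ≤ n, A.run M₁ m w₁ = A.run M₂ m w₂ := fun m hm =>
    A.run_eq_of_typeOf_eq_s15 (typeOf_eq_of_le h hm)
  constructor
  · intro hacc
    obtain ⟨k, hk, hacc⟩ := A.exists_acceptsAt_le hacc hdec₁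
    exact ⟨k, (A.acceptsAt_congr_s15 fun m hm => hrun m (hm.trans hk)).1 hacc⟩
  · intro hacc
    obtain ⟨k, hk, hacc⟩ := A.exists_acceptsAt_le hacc hdec₂
    exact ⟨k, (A.acceptsAt_congr_s15 fun m hm => hrun m (hm.trans hk)).2 hacc⟩

abbrev Letter := Set (Fin 5)

/-- The atoms `2, 3, 4` are `Q₁, Q₂, Q₃`; position `i` of a labelled path carries `Q_{i mod 3 + 1}`
and `P₀` or `P₁` according to the `i`-th Thue–Morse bit. -/
def orientAtom (k : ZMod 3) : Fin 5 := Fin.addNat k 2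

def tmLetter (i : ℕ) : Letter := {if thueMorse i then 1 else 0, orientAtom i}

def Follows (ℓ ℓ' : Letter) : Prop := ∃ k : ZMod 3, orientAtom k ∈ ℓ ∧ orientAtom (k + 1) ∈ ℓ'

theorem orientAtom_injective : Function.Injective orientAtom := fun _ _ h =>
  (Fin.addNat_inj 2).1 h

theorem orientAtom_ne_zero_ne_one (k : ZMod 3) : orientAtom k ≠ 0 ∧ orientAtom k ≠ 1 := by
  revert k; decide

theorem orientAtom_mem_tmLetter {k : ZMod 3} {i : ℕ} : orientAtom k ∈ tmLetter i ↔ k = i := by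
  have := orientAtom_ne_zero_ne_one k
  rw [tmLetter, Set.mem_insert_iff, Set.mem_singleton_iff, orientAtom_injective.eq_iff]
  split_ifs <;> simp [this]

theorem follows_tmLetter {i j : ℕ} : Follows (tmLetter i) (tmLetter j) ↔ (j : ZMod 3) = i + 1 := by
  simp [Follows, orientAtom_mem_tmLetter, eq_comm]

theorem one_mem_tmLetter {i : ℕ} : (1 : Fin 5) ∈ tmLetter i ↔ thueMorse i = true := by
  have := orientAtom_ne_zero_ne_one (i : ZMod 3)
  rw [tmLetter, Set.mem_insert_iff, Set.mem_singleton_iff]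
  cases thueMorse i <;> simp [this.2.symm]

theorem thueMorse_eq_of_tmLetter_eq {i j : ℕ} (h : tmLetter i = tmLetter j) :
    thueMorse i = thueMorse j := by
  rw [Bool.eq_iff_iff, ← one_mem_tmLetter, ← one_mem_tmLetter, h]

namespace KModel

variable {W : Type} (M : KModel (Fin 5) Unit W)

def label (w : W) : Letter := {p | M.val p w}

def Forward (v u : W) : Prop := M.rel () v u ∧ Follows (M.label v) (M.label u)

def walkEnds : ℕ → W → Set W
  | 0, v => {v}
  | t + 1, v => {x | ∃ u, M.Forward v u ∧ x ∈ walkEnds t u}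

variable {M}

theorem label_image_walkEnds_succ (t : ℕ) (v : W) :
    M.label '' M.walkEnds (t + 1) v = {ℓ | ∃ u, M.Forward v u ∧ ℓ ∈ M.label '' M.walkEnds t u} := by
  ext ℓ
  simp only [walkEnds, Set.mem_image, Set.mem_ofPred_eq]
  constructor
  · rintro ⟨x, ⟨u, hu, hx⟩, rfl⟩
    exact ⟨u, hu, x, hx, rfl⟩
  · rintro ⟨u, hu, x, hx, rfl⟩
    exact ⟨x, ⟨u, hu, hx⟩, rfl⟩

end KModel

theorem KModel.not_forall_label_walkEnds_eq_tmLetter {W : Type} [Finite W]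
    (M : KModel (Fin 5) Unit W) (w : W) :
    ¬ ∀ t, ∃ s, ∀ m ≤ t, M.label '' M.walkEnds m w = {tmLetter (s + m)} := by
  intro htm
  obtain ⟨i, p, hp, hper⟩ := Finite.exists_eventually_periodic (f := M.walkEnds)
    (fun f v => {x | ∃ u, M.Forward v u ∧ x ∈ f u}) fun t => funext fun v => rfl
  obtain ⟨s, hs⟩ := htm (i + p + p)
  refine thueMorse_overlapFree hp (s + i) fun m hm => thueMorse_eq_of_tmLetter_eq ?_
  have h := hs (i + m + p) (by omega)
  rw [congrFun (hper m) w, hs (i + m) (by omega), Set.singleton_eq_singleton_iff] at h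
  simpa only [add_assoc] using h

abbrev WalkState := Letter × List (Set Letter)

def IsTMLayers (L : List (Set Letter)) : Prop :=
  ∃ s, L = (List.range L.length).map fun m => {tmLetter (s + m)}

theorem isTMLayers_map_range_iff {f : ℕ → Set Letter} {t : ℕ} :
    IsTMLayers ((List.range (t + 1)).map f) ↔ ∃ s, ∀ m ≤ t, f m = {tmLetter (s + m)} := by
  simp [IsTMLayers, List.map_inj_left]

theorem IsTMLayers.exists_eq_of_append {L : List (Set Letter)} {x : Set Letter}
    (h : IsTMLayers (L ++ [x])) : ∃ i, x = {tmLetter i} := by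
  obtain ⟨s, hs⟩ := h
  rw [List.length_append, List.length_singleton, List.range_succ, List.map_append] at hs
  exact ⟨s + L.length, by simpa using (List.append_inj' hs rfl).2⟩

/-- A forward neighbour that has stopped yields the empty layer, which makes this node stop too. -/
def nextLayer (ℓ : Letter) (inbox : Set WalkState) : Set Letter :=
  {x | (∀ q ∈ inbox, Follows ℓ q.1 → IsTMLayers q.2) ∧
    ∃ q ∈ inbox, Follows ℓ q.1 ∧ x ∈ q.2.getLastD ∅}

open Classical in
noncomputable def tmWalkAutomaton : MPA (Fin 5) Unit WalkState WalkState where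
  init ℓ := (ℓ, [{ℓ}])
  trans inbox q := if IsTMLayers q.2 then (q.1, q.2 ++ [nextLayer q.1 (inbox ())]) else q
  msgf q _ := q
  -- a node that stops in round `t` holds `t + 1` layers
  accept := {q | ¬ IsTMLayers q.2 ∧ Odd q.2.length}
  reject := {q | ¬ IsTMLayers q.2 ∧ Even q.2.length}

def KModel.idealLayers {W : Type} (M : KModel (Fin 5) Unit W) (t : ℕ) (v : W) :
    List (Set Letter) :=
  (List.range (t + 1)).map fun m => M.label '' M.walkEnds m v

theorem KModel.idealLayers_succ {W : Type} (M : KModel (Fin 5) Unit W) (t : ℕ) (v : W) :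
    M.idealLayers (t + 1) v = M.idealLayers t v ++ [M.label '' M.walkEnds (t + 1) v] := by
  rw [idealLayers, List.range_succ, List.map_append, List.map_singleton]
  rfl

theorem KModel.getLastD_idealLayers {W : Type} (M : KModel (Fin 5) Unit W) (t : ℕ) (v : W) :
    (M.idealLayers t v).getLastD ∅ = M.label '' M.walkEnds t v := by
  cases t with
  | zero => rfl
  | succ t => simp [idealLayers_succ]

namespace tmWalkAutomaton

variable {W : Type} {M : KModel (Fin 5) Unit W}

local notation "run" => tmWalkAutomaton.run M

open Classical in
theorem run_succ (t : ℕ) (v : W) :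
    run (t + 1) v = if IsTMLayers (run t v).2 then
      ((run t v).1, (run t v).2 ++ [nextLayer (run t v).1 {q | ∃ u, M.rel () v u ∧ q = run t u}])
      else run t v := rfl

theorem run_fst (t : ℕ) (v : W) : (run t v).1 = M.label v := by
  induction t with
  | zero => rfl
  | succ t ih => rw [run_succ]; split_ifs <;> exact ih

theorem run_succ_of_not_isTMLayers {t : ℕ} {v : W} (h : ¬ IsTMLayers (run t v).2) :
    run (t + 1) v = run t v := by
  rw [run_succ, if_neg h]

theorem run_succ_of_isTMLayers {t : ℕ} {v : W} (h : IsTMLayers (run t v).2) :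
    run (t + 1) v = (M.label v, (run t v).2 ++
      [{x | (∀ u, M.Forward v u → IsTMLayers (run t u).2) ∧
        ∃ u, M.Forward v u ∧ x ∈ (run t u).2.getLastD ∅}]) := by
  rw [run_succ, if_pos h, run_fst]
  congr
  ext x
  simp only [nextLayer, KModel.Forward, Set.mem_ofPred_eq]
  constructor
  · rintro ⟨hall, _, ⟨u, hu, rfl⟩, hf, hx⟩
    rw [run_fst] at hf
    exact ⟨fun u' hu' => hall _ ⟨u', hu'.1, rfl⟩ (by rw [run_fst]; exact hu'.2), u, ⟨hu, hf⟩, hx⟩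
  · rintro ⟨hall, u, hu, hx⟩
    refine ⟨?_, _, ⟨u, hu.1, rfl⟩, by rw [run_fst]; exact hu.2, hx⟩
    rintro _ ⟨u', hu', rfl⟩ hf
    rw [run_fst] at hf
    exact hall u' ⟨hu', hf⟩

theorem run_succ_eq_idealLayers {t : ℕ} {v : W} (hv : (run t v).2 = M.idealLayers t v)
    (hgood : IsTMLayers (M.idealLayers t v))
    (hnbr : ∀ u, M.Forward v u → (run t u).2 = M.idealLayers t u ∧ IsTMLayers (M.idealLayers t u)) :
    (run (t + 1) v).2 = M.idealLayers (t + 1) v := by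
  rw [run_succ_of_isTMLayers (hv ▸ hgood), hv, M.idealLayers_succ, M.label_image_walkEnds_succ]
  have hall : ∀ u, M.Forward v u → IsTMLayers (run t u).2 := fun u hu =>
    (hnbr u hu).1 ▸ (hnbr u hu).2
  refine congrArg (M.idealLayers t v ++ [·]) (Set.ext fun x => ?_)
  rw [Set.mem_ofPred_eq, Set.mem_ofPred_eq, and_iff_right hall]
  refine exists_congr fun u => and_congr_right fun hu => ?_
  rw [(hnbr u hu).1, M.getLastD_idealLayers]

theorem run_zero_snd (v : W) : (run 0 v).2 = M.idealLayers 0 v := by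
  simp only [KModel.idealLayers, KModel.walkEnds, zero_add, List.range_one, List.map_cons,
    List.map_nil, Set.image_singleton]
  rfl

theorem run_snd_eq_idealLayers {t : ℕ} {v : W} (h : IsTMLayers (run t v).2) :
    (run t v).2 = M.idealLayers t v := by
  induction t generalizing v with
  | zero => exact run_zero_snd v
  | succ t ih =>
    have hv : IsTMLayers (run t v).2 := by
      by_contra hv
      rw [run_succ_of_not_isTMLayers hv] at h
      exact hv h
    have hnbr : ∀ u, M.Forward v u → IsTMLayers (run t u).2 := by
      by_contra hu
      rw [run_succ_of_isTMLayers hv] at h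
      obtain ⟨i, hi⟩ := h.exists_eq_of_append
      exact hu ((Set.ext_iff.1 hi (tmLetter i)).2 rfl).1
    exact run_succ_eq_idealLayers (ih hv) (ih hv ▸ hv) fun u hu =>
      ⟨ih (hnbr u hu), ih (hnbr u hu) ▸ hnbr u hu⟩

theorem run_eq_of_not_isTMLayers {t t' : ℕ} {v : W} (h : ¬ IsTMLayers (run t v).2) (ht : t ≤ t') :
    run t' v = run t v := by
  induction t', ht using Nat.le_induction with
  | base => rfl
  | succ t' _ ih => rw [run_succ_of_not_isTMLayers (ih ▸ h), ih]

theorem length_run_snd {t : ℕ} {v : W} (h : ∀ t' < t, IsTMLayers (run t' v).2) :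
    (run t v).2.length = t + 1 := by
  induction t with
  | zero => rfl
  | succ t ih =>
    rw [run_succ_of_isTMLayers (h t t.lt_succ_self), List.length_append, List.length_singleton,
      ih fun t' ht' => h t' (by omega)]

theorem exists_not_isTMLayers [Finite W] (w : W) : ∃ t, ¬ IsTMLayers (run t w).2 := by
  by_contra! h
  refine M.not_forall_label_walkEnds_eq_tmLetter w fun t => ?_
  rw [← isTMLayers_map_range_iff, ← KModel.idealLayers, ← run_snd_eq_idealLayers (h t)]
  exact h t

theorem accepts_iff {t : ℕ} {w : W} (hrun : ∀ t' < t, IsTMLayers (run t' w).2)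
    (hstop : ¬ IsTMLayers (run t w).2) : tmWalkAutomaton.accepts M w ↔ Even t := by
  have hlen := length_run_snd hrun
  constructor
  · rintro ⟨n, hacc, -⟩
    obtain hn | hn := lt_or_ge n t
    · exact absurd (hrun n hn) hacc.1
    · rw [run_eq_of_not_isTMLayers hstop hn] at hacc
      simpa [hlen, Nat.odd_add_one] using hacc.2
  · intro ht
    refine ⟨t, ⟨hstop, by simpa [hlen, Nat.odd_add_one] using ht⟩,
      fun m hm hrej => hrej.1 (hrun m hm)⟩

theorem haltsOn [Finite W] (w : W) : tmWalkAutomaton.haltsOn M w := by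
  classical
  have hex := exists_not_isTMLayers (M := M) w
  have hrun : ∀ t' < Nat.find hex, IsTMLayers (run t' w).2 := fun t' ht' =>
    not_not.1 (Nat.find_min hex ht')
  refine ⟨?_, fun n m hnm hmem => run_eq_of_not_isTMLayers (hmem.elim And.left And.left) hnm⟩
  by_cases heven : Even (Nat.find hex)
  · exact Or.inl ((accepts_iff hrun (Nat.find_spec hex)).2 heven)
  · refine Or.inr ⟨Nat.find hex, ⟨Nat.find_spec hex, ?_⟩, fun m hm hacc => hacc.1 (hrun m hm)⟩
    simpa [length_run_snd hrun, Nat.even_add_one] using heven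

end tmWalkAutomaton

def pathModel (N : ℕ) : KModel (Fin 5) Unit (Fin (N + 1)) where
  val p i := p ∈ tmLetter i
  rel _ i j := i.val + 1 = j.val ∨ j.val + 1 = i.val

namespace pathModel

theorem rel_iff {N : ℕ} {r : Unit} {i j : Fin (N + 1)} :
    (pathModel N).rel r i j ↔ i.val + 1 = j.val ∨ j.val + 1 = i.val := Iff.rfl

theorem isSB (N : ℕ) : IsSB (pathModel N) :=
  ⟨fun _ _ h => h.symm, fun _ h => by rw [rel_iff] at h; omega⟩

theorem label_eq {N : ℕ} (i : Fin (N + 1)) : (pathModel N).label i = tmLetter i := rfl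

theorem forward_iff {N : ℕ} {i j : Fin (N + 1)} :
    (pathModel N).Forward i j ↔ j.val = i.val + 1 := by
  simp only [KModel.Forward, rel_iff, label_eq, follows_tmLetter]
  constructor
  · rintro ⟨h | h, hf⟩
    · exact h.symm
    · rw [← h, Nat.cast_add, Nat.cast_one] at hf
      exact absurd (by linear_combination -hf : (2 : ZMod 3) = 0) (by decide)
  · intro h
    exact ⟨Or.inl h.symm, by rw [h, Nat.cast_add, Nat.cast_one]⟩

theorem walkEnds_eq {N : ℕ} (t : ℕ) (i : Fin (N + 1)) :
    (pathModel N).walkEnds t i = {j | j.val = i.val + t} := by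
  induction t generalizing i with
  | zero => ext j; simp [KModel.walkEnds, Fin.ext_iff]
  | succ t ih =>
    ext j
    simp only [KModel.walkEnds, forward_iff, ih, Set.mem_ofPred_eq]
    constructor
    · rintro ⟨u, hu, hj⟩; omega
    · intro hj; exact ⟨⟨i.val + 1, by omega⟩, rfl, by dsimp only; omega⟩

theorem label_image_walkEnds {N t : ℕ} {i : Fin (N + 1)} :
    (pathModel N).label '' (pathModel N).walkEnds t i =
      if i.val + t ≤ N then {tmLetter (i + t)} else ∅ := by
  rw [walkEnds_eq]
  split_ifs with h
  · rw [show {j : Fin (N + 1) | j.val = i.val + t} = {⟨i + t, by omega⟩} by ext; simp [Fin.ext_iff],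
      Set.image_singleton]
    rfl
  · rw [Set.image_eq_empty]
    ext j
    simp only [Set.mem_ofPred_eq, Set.mem_empty_iff_false, iff_false]
    omega

theorem isTMLayers_idealLayers_iff {N t : ℕ} {i : Fin (N + 1)} :
    IsTMLayers ((pathModel N).idealLayers t i) ↔ i.val + t ≤ N := by
  rw [KModel.idealLayers, isTMLayers_map_range_iff]
  constructor
  · rintro ⟨s, hs⟩
    by_contra hlt
    have := hs t le_rfl
    rw [label_image_walkEnds, if_neg hlt] at this
    exact Set.singleton_ne_empty _ this.symm
  · intro h
    exact ⟨i, fun m hm => by rw [label_image_walkEnds, if_pos (by omega)]⟩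

theorem run_snd_eq_idealLayers {N t : ℕ} {i : Fin (N + 1)} (h : i.val + t ≤ N) :
    (tmWalkAutomaton.run (pathModel N) t i).2 = (pathModel N).idealLayers t i := by
  induction t generalizing i with
  | zero => exact tmWalkAutomaton.run_zero_snd i
  | succ t ih =>
    refine tmWalkAutomaton.run_succ_eq_idealLayers (ih (by omega))
      (isTMLayers_idealLayers_iff.2 (by omega)) fun u hu => ?_
    have hu : u.val + t ≤ N := by rw [forward_iff.1 hu]; omega
    exact ⟨ih hu, isTMLayers_idealLayers_iff.2 hu⟩

theorem accepts_iff (N : ℕ) : tmWalkAutomaton.accepts (pathModel N) 0 ↔ Even (N + 1) := by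
  refine tmWalkAutomaton.accepts_iff (fun t ht => ?_) fun h => ?_
  · rw [run_snd_eq_idealLayers (by rw [Fin.val_zero]; omega), isTMLayers_idealLayers_iff,
      Fin.val_zero]
    omega
  · rw [tmWalkAutomaton.run_snd_eq_idealLayers h, isTMLayers_idealLayers_iff] at h
    simp at h

theorem typeOf_castSucc {n t : ℕ} {i : Fin (n + 1)} (h : i.val + t ≤ n) :
    typeOf (pathModel n) t i = typeOf (pathModel (n + 1)) t i.castSucc := by
  induction t generalizing i with
  | zero => rfl
  | succ t ih =>
    refine Prod.ext (ih (by omega)) (funext fun _ => funext fun σ => propext ?_)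
    constructor
    · rintro ⟨j, hj, rfl⟩
      exact ⟨j.castSucc, hj, (ih (by rw [rel_iff] at hj; omega)).symm⟩
    · rintro ⟨j, hj, rfl⟩
      have hj' : j.val + t ≤ n := by simp only [rel_iff, Fin.val_castSucc] at hj; omega
      exact ⟨⟨j, by omega⟩, hj, ih hj'⟩

end pathModel

/-- there is an automaton on finite SB(Π)-models that halts on every
finite pointed SB(Π)-model but is strongly nonlocal: no automaton specifying a local
algorithm (accepting or rejecting every finite pointed SB(Π)-model within a fixed
number n of rounds) accepts exactly the same finite pointed SB(Π)-models. -/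
theorem stmt_15 :
    ∃ (Q Msg : Type) (A : MPA (Fin 5) Unit Q Msg),
      (∀ (W : Type), Finite W → ∀ (M : KModel (Fin 5) Unit W), IsSB M →
        ∀ w : W, A.haltsOn M w) ∧
      ¬ ∃ (Q' Msg' : Type) (B : MPA (Fin 5) Unit Q' Msg') (n : ℕ),
          (∀ (W : Type), Finite W → ∀ (M : KModel (Fin 5) Unit W), IsSB M → ∀ w : W,
            ∃ m ≤ n, B.acceptsAt M w m ∨ B.rejectsAt M w m) ∧
          (∀ (W : Type), Finite W → ∀ (M : KModel (Fin 5) Unit W), IsSB M → ∀ w : W,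
            (A.accepts M w ↔ B.accepts M w)) := by
  refine ⟨_, _, tmWalkAutomaton, fun W _ M _ w => tmWalkAutomaton.haltsOn w, ?_⟩
  rintro ⟨Q', Msg', B, n, hdec, hagree⟩
  have hB : B.accepts (pathModel n) 0 ↔ B.accepts (pathModel (n + 1)) 0 :=
    B.accepts_iff_of_typeOf_eq (pathModel.typeOf_castSucc (by simp))
      (hdec _ inferInstance _ (pathModel.isSB n) 0) (hdec _ inferInstance _ (pathModel.isSB _) _)
  have := (hagree _ inferInstance _ (pathModel.isSB n) 0).trans
    (hB.trans (hagree _ inferInstance _ (pathModel.isSB (n + 1)) 0).symm)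
  rw [pathModel.accepts_iff, pathModel.accepts_iff] at this
  simp only [Nat.even_add_one, not_not] at this
  exact (not_iff_self this).elim
end
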